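/- arXiv:math/0611900 — 2 statements merged into one kernel-verified Lean document; each statement's English description precedes it below -/
import Mathlib

section
/- Let X and Y be compact metric spaces and (f_n : X → Y) a sequence of homeomorphisms. Suppose there are positive reals ε_n → 0 such that d(f_m(x), f_n(x)) ≤ ε_n and d(f_m⁻¹(y), f_n⁻¹(y)) ≤ ε_n for all x ∈ X, y ∈ Y, and m ≥ n. Then the maps f_n converge uniformly to a continuous map f : X → Y, the inverses f_n⁻¹ converge uniformly to a continuous map g : Y → X, and g ∘ f = id_X and f ∘ g = id_Y provided additionally that f and g are inverse on a dense subset; in particular if the sets where f_n and f_{n-1} (resp. their inverses) differ are contained in nested sets U_n (resp. f_n(U_n)) whose intersections have empty interior, then f is a homeomorphism. -/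
/-! Outside `U n` the maps `f m`, `m ≥ n`, all agree with `f n`, and likewise their inverses
agree with `(f n).symm` outside `f n '' U n`. Hence the uniform limits `F` and `G` are mutually
inverse off `⋂ n, U n` and off `⋂ n, f n '' U n`; these sets have dense complements, so by
continuity `G ∘ F = id` and `F ∘ G = id` everywhere. -/

open Filter Topology Set

theorem exists_tendstoUniformly_of_dist_le {α β : Type*} [PseudoMetricSpace β] [CompleteSpace β]
    {F : ℕ → α → β} {ε : ℕ → ℝ} (hε : Tendsto ε atTop (𝓝 0))
    (hF : ∀ m n, n ≤ m → ∀ x, dist (F m x) (F n x) ≤ ε n) :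
    ∃ G : α → β, TendstoUniformly F G atTop := by
  have hcauchy : ∀ x, CauchySeq (F · x) := fun x =>
    cauchySeq_of_le_tendsto_0' ε (fun n m hnm => dist_comm (F n x) _ ▸ hF m n hnm x) hε
  choose G hG using fun x => cauchySeq_tendsto_of_complete (hcauchy x)
  refine ⟨G, Metric.tendstoUniformly_iff.2 fun δ hδ => ?_⟩
  filter_upwards [hε.eventually (gt_mem_nhds hδ)] with n hn x
  have hle : dist (G x) (F n x) ≤ ε n :=
    Metric.isClosed_closedBall.mem_of_tendsto (hG x)
      (eventually_atTop.2 ⟨n, fun m hm => hF m n hm x⟩)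
  exact hle.trans_lt hn

namespace Equiv

variable {α β : Type*} {e : ℕ → α ≃ β} {U : ℕ → Set α}

theorem seq_apply_eq_of_notMem_of_le (hU : ∀ n, U (n + 1) ⊆ U n)
    (he : ∀ n, ∀ x ∉ U n, e (n + 1) x = e n x) {n m : ℕ} (hnm : n ≤ m) {x : α} (hx : x ∉ U n) :
    e m x = e n x := by
  induction m, hnm using Nat.le_induction with
  | base => rfl
  | succ m hnm ih =>
    have hxm : x ∉ U m := fun h => hx (antitone_nat_of_succ_le hU hnm h)
    rw [he m x hxm, ih]

theorem seq_symm_succ_apply_eq_of_notMem_image (he : ∀ n, ∀ x ∉ U n, e (n + 1) x = e n x)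
    (n : ℕ) (y : β) (hy : y ∉ e n '' U n) : (e (n + 1)).symm y = (e n).symm y := by
  rw [(e n).image_eq_preimage_symm] at hy
  rw [symm_apply_eq, he n _ hy, apply_symm_apply]

theorem seq_image_succ_subset (hU : ∀ n, U (n + 1) ⊆ U n)
    (he : ∀ n, ∀ x ∉ U n, e (n + 1) x = e n x) (n : ℕ) : e (n + 1) '' U (n + 1) ⊆ e n '' U n := by
  intro y hy
  by_contra h
  rw [(e (n + 1)).image_eq_preimage_symm, mem_preimage,
    seq_symm_succ_apply_eq_of_notMem_image he n y h] at hy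
  exact h ((e n).image_eq_preimage_symm _ ▸ hU n hy)

variable [TopologicalSpace β] [T2Space β]

theorem eq_of_tendsto_of_notMem (hU : ∀ n, U (n + 1) ⊆ U n)
    (he : ∀ n, ∀ x ∉ U n, e (n + 1) x = e n x) {x : α} {y : β}
    (hy : Tendsto (e · x) atTop (𝓝 y)) {n : ℕ} (hx : x ∉ U n) : y = e n x :=
  tendsto_nhds_unique hy
    (tendsto_atTop_of_eventually_const fun _ hm => seq_apply_eq_of_notMem_of_le hU he hm hx)

theorem notMem_iInter_image_of_tendsto (hU : ∀ n, U (n + 1) ⊆ U n)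
    (he : ∀ n, ∀ x ∉ U n, e (n + 1) x = e n x) {x : α} {y : β}
    (hy : Tendsto (e · x) atTop (𝓝 y)) (hx : x ∉ ⋂ n, U n) : y ∉ ⋂ n, e n '' U n := by
  obtain ⟨n, hn⟩ : ∃ n, x ∉ U n := by simpa using hx
  rw [eq_of_tendsto_of_notMem hU he hy hn, mem_iInter]
  exact fun h => hn ((e n).injective.mem_set_image.1 (h n))

variable [TopologicalSpace α] [T2Space α]

theorem leftInvOn_of_tendsto (hU : ∀ n, U (n + 1) ⊆ U n)
    (he : ∀ n, ∀ x ∉ U n, e (n + 1) x = e n x) {F : α → β} {G : β → α}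
    (hF : ∀ x, Tendsto (e · x) atTop (𝓝 (F x)))
    (hG : ∀ y, Tendsto (fun n => (e n).symm y) atTop (𝓝 (G y))) :
    LeftInvOn G F (⋂ n, U n)ᶜ := by
  intro x hx
  obtain ⟨n, hn⟩ : ∃ n, x ∉ U n := by simpa using hx
  have hFx : e n x ∉ e n '' U n := fun h => hn ((e n).injective.mem_set_image.1 h)
  rw [eq_of_tendsto_of_notMem hU he (hF x) hn,
    eq_of_tendsto_of_notMem (seq_image_succ_subset hU he)
      (seq_symm_succ_apply_eq_of_notMem_image he) (hG _) hFx, symm_apply_apply]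

theorem rightInvOn_of_tendsto (hU : ∀ n, U (n + 1) ⊆ U n)
    (he : ∀ n, ∀ x ∉ U n, e (n + 1) x = e n x) {F : α → β} {G : β → α}
    (hF : ∀ x, Tendsto (e · x) atTop (𝓝 (F x)))
    (hG : ∀ y, Tendsto (fun n => (e n).symm y) atTop (𝓝 (G y))) :
    LeftInvOn F G (⋂ n, e n '' U n)ᶜ :=
  leftInvOn_of_tendsto (e := fun n => (e n).symm) (seq_image_succ_subset hU he)
    (seq_symm_succ_apply_eq_of_notMem_image he) hG hF

theorem image_iInter_eq_of_tendsto (hU : ∀ n, U (n + 1) ⊆ U n)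
    (he : ∀ n, ∀ x ∉ U n, e (n + 1) x = e n x) {F : α → β} {G : β → α}
    (hF : ∀ x, Tendsto (e · x) atTop (𝓝 (F x)))
    (hG : ∀ y, Tendsto (fun n => (e n).symm y) atTop (𝓝 (G y)))
    (hGF : Function.LeftInverse G F) (hFG : Function.RightInverse G F) :
    F '' ⋂ n, U n = ⋂ n, e n '' U n := by
  rw [image_eq_preimage_of_inverse hGF hFG]
  ext y
  refine ⟨fun hy => ?_, fun hy => ?_⟩
  · by_contra h
    refine notMem_iInter_image_of_tendsto (e := fun n => (e n).symm)
      (seq_image_succ_subset hU he) (seq_symm_succ_apply_eq_of_notMem_image he) (hG y) h ?_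
    simpa only [symm_image_image, mem_preimage] using hy
  · by_contra h
    exact notMem_iInter_image_of_tendsto hU he (hF (G y)) h (by rwa [hFG y])

end Equiv

theorem converging_homeomorphisms_general
    {X Y : Type*} [MetricSpace X] [MetricSpace Y] [CompactSpace X] [CompactSpace Y]
    (f : ℕ → X ≃ₜ Y) (U : ℕ → Set X) (ε : ℕ → ℝ)
    (hε : Filter.Tendsto ε Filter.atTop (nhds 0))
    (hUnested : ∀ n, U (n + 1) ⊆ U n)
    (hagree : ∀ n, ∀ x ∉ U n, f (n + 1) x = f n x)
    (hcauchy : ∀ m n : ℕ, n ≤ m → ∀ x : X, dist (f m x) (f n x) ≤ ε n)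
    (hcauchy' : ∀ m n : ℕ, n ≤ m → ∀ y : Y, dist ((f m).symm y) ((f n).symm y) ≤ ε n)
    (hint : interior (⋂ n, U n) = ∅)
    (hint' : interior (⋂ n, (f n) '' U n) = ∅) :
    ∃ F : X ≃ₜ Y,
      TendstoUniformly (fun n x => f n x) F Filter.atTop ∧
      TendstoUniformly (fun n y => (f n).symm y) F.symm Filter.atTop ∧
      F '' (⋂ n, U n) = ⋂ n, (f n) '' U n := by
  let e : ℕ → X ≃ Y := fun n => (f n).toEquiv
  obtain ⟨F, hF⟩ := exists_tendstoUniformly_of_dist_le hε hcauchy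
  obtain ⟨G, hG⟩ := exists_tendstoUniformly_of_dist_le hε hcauchy'
  have hFc := hF.continuous (Frequently.of_forall fun n => (f n).continuous)
  have hGc := hG.continuous (Frequently.of_forall fun n => (f n).symm.continuous)
  have hGF : Function.LeftInverse G F := congrFun <|
    (hGc.comp hFc).ext_on (interior_eq_empty_iff_dense_compl.1 hint) continuous_id
      (Equiv.leftInvOn_of_tendsto (e := e) hUnested hagree hF.tendsto_at hG.tendsto_at)
  have hFG : Function.RightInverse G F := congrFun <|
    (hFc.comp hGc).ext_on (interior_eq_empty_iff_dense_compl.1 hint') continuous_id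
      (Equiv.rightInvOn_of_tendsto (e := e) hUnested hagree hF.tendsto_at hG.tendsto_at)
  exact ⟨⟨⟨F, G, hGF, hFG⟩, hFc, hGc⟩, hF, hG,
    Equiv.image_iInter_eq_of_tendsto (e := e) hUnested hagree hF.tendsto_at hG.tendsto_at
      hGF hFG⟩

/-- Lemma on convergence of homeomorphisms between compact metric spaces. -/
theorem converging_homeomorphisms
    {X Y : Type*} [MetricSpace X] [MetricSpace Y] [CompactSpace X] [CompactSpace Y]
    (f : ℕ → X ≃ₜ Y) (U : ℕ → Set X) (ε : ℕ → ℝ)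
    (hεpos : ∀ n, 0 < ε n)
    (hε : Filter.Tendsto ε Filter.atTop (nhds 0))
    (hUnested : ∀ n, U (n + 1) ⊆ U n)
    (hagree : ∀ n, ∀ x ∉ U n, f (n + 1) x = f n x)
    (hcauchy : ∀ m n : ℕ, n ≤ m → ∀ x : X, dist (f m x) (f n x) ≤ ε n)
    (hcauchy' : ∀ m n : ℕ, n ≤ m → ∀ y : Y, dist ((f m).symm y) ((f n).symm y) ≤ ε n)
    (hint : interior (⋂ n, U n) = ∅)
    (hint' : interior (⋂ n, (f n) '' U n) = ∅) :
    ∃ F : X ≃ₜ Y,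
      TendstoUniformly (fun n x => f n x) F Filter.atTop ∧
      TendstoUniformly (fun n y => (f n).symm y) F.symm Filter.atTop ∧
      F '' (⋂ n, U n) = ⋂ n, (f n) '' U n :=
  converging_homeomorphisms_general f U ε hε hUnested hagree hcauchy hcauchy' hint hint'
end

section
/- Two solenoids Σ and Σ' of types ϖ = (w_1, w_2, ...) and ϖ' = (w'_1, w'_2, ...) are homeomorphic if deleting finitely many terms from ϖ and from ϖ' makes the two sequences identical. -/
/-- The solenoid of type ϖ = (w 1, w 2, ...): the inverse limit of the covering maps
z ↦ z ^ (w n) of the unit circle. -/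
def solenoid (w : ℕ → ℤ) : Set (ℕ → Circle) :=
  {x | ∀ n : ℕ, x n = x (n + 1) ^ w (n + 1)}

lemma solenoid_congr {w w' : ℕ → ℤ} (h : ∀ n, 1 ≤ n → w n = w' n) :
    solenoid w = solenoid w' := by
  ext x
  simp only [solenoid, Set.mem_setOf_eq]
  constructor <;> intro hx n
  · rw [hx n, h (n + 1) (by omega)]
  · rw [hx n, h (n + 1) (by omega)]

/-- Deleting the first term of the sequence gives a homeomorphic solenoid. -/
noncomputable def solenoidShiftHomeo (w : ℕ → ℤ) :
    solenoid w ≃ₜ solenoid (fun n => w (n + 1)) where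
  toFun x := ⟨fun n => (x : ℕ → Circle) (n + 1), fun n => x.2 (n + 1)⟩
  invFun y := ⟨fun n => Nat.casesOn n ((y : ℕ → Circle) 0 ^ w 1) (fun m => (y : ℕ → Circle) m),
    by
      intro n
      cases n with
      | zero => rfl
      | succ m => exact y.2 m⟩
  left_inv x := Subtype.ext (funext fun n => by
    cases n with
    | zero => exact (x.2 0).symm
    | succ m => rfl)
  right_inv y := Subtype.ext (funext fun n => by cases n <;> rfl)
  continuous_toFun := by
    apply Continuous.subtype_mk
    exact continuous_pi fun n => (continuous_apply (n + 1)).comp continuous_subtype_val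
  continuous_invFun := by
    apply Continuous.subtype_mk
    apply continuous_pi
    intro n
    cases n with
    | zero => exact ((continuous_apply 0).comp continuous_subtype_val).zpow _
    | succ m => exact (continuous_apply m).comp continuous_subtype_val

lemma solenoid_drop_homeo (w : ℕ → ℤ) (k : ℕ) :
    Nonempty (solenoid w ≃ₜ solenoid (fun n => w (k + n))) := by
  induction k with
  | zero =>
    refine ⟨Homeomorph.setCongr ?_⟩
    exact congrArg solenoid (funext fun n => by simp)
  | succ m ih =>
    obtain ⟨e⟩ := ih
    refine ⟨e.trans ((solenoidShiftHomeo _).trans (Homeomorph.setCongr ?_))⟩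
    exact congrArg solenoid (funext fun n => by ring_nf)

/-- If deleting finitely many terms from ϖ and ϖ' makes the two sequences
identical, then the corresponding solenoids are homeomorphic. -/
theorem solenoids_homeomorphic_of_tail_equal
    (w w' : ℕ → ℤ) (hw : ∀ n, 2 ≤ w n) (hw' : ∀ n, 2 ≤ w' n)
    (h : ∃ k k' : ℕ, ∀ n : ℕ, 1 ≤ n → w (k + n) = w' (k' + n)) :
    Nonempty (solenoid w ≃ₜ solenoid w') := by
  obtain ⟨k, k', h⟩ := h
  obtain ⟨e₁⟩ := solenoid_drop_homeo w k
  obtain ⟨e₂⟩ := solenoid_drop_homeo w' k'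
  exact ⟨e₁.trans ((Homeomorph.setCongr (solenoid_congr h)).trans e₂.symm)⟩
end
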